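/- arXiv:1412.6821 — 4 statements merged into one kernel-verified Lean document; each statement's English description precedes it below -/
import Mathlib

section
/- For u, v ∈ ℝ² and σ > 0, define N_u : ℝ² → ℝ by N_u(x) = (1/(4πσ)) · exp(-‖x - u‖²/(4σ)). Then the L²(ℝ²) norm of N_u - N_v equals (1/√(4πσ)) · √(1 - exp(-‖u - v‖²/(8σ))). -/
/-!
Expanding the square, the cross term `exp (-c‖x - u‖²) exp (-c‖x - v‖²)` is, by Apollonius's
theorem, `exp (-c‖u - v‖² / 2)` times a Gaussian of the same width `2c` as the two squares, centred
at the midpoint of `u` and `v`. All three integrals therefore equal `(π / 2c) ^ (n / 2)`; here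
`c = 1 / 4σ` and `n = 2`.
-/

open MeasureTheory Real

theorem sq_exp_neg_mul (c t : ℝ) : rexp (-c * t) ^ 2 = rexp (-(2 * c) * t) := by
  rw [← exp_nat_mul]; ring_nf

section Gaussian

variable {V : Type*} [NormedAddCommGroup V] [InnerProductSpace ℝ V]

theorem exp_neg_mul_norm_sub_sq_mul_exp_neg_mul_norm_sub_sq (c : ℝ) (u v x : V) :
    rexp (-c * ‖x - u‖ ^ 2) * rexp (-c * ‖x - v‖ ^ 2)
      = rexp (-(c / 2) * ‖u - v‖ ^ 2) * rexp (-(2 * c) * ‖x - midpoint ℝ u v‖ ^ 2) := by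
  have apollonius :=
    EuclideanGeometry.dist_sq_add_dist_sq_eq_two_mul_dist_midpoint_sq_add_half_dist_sq x u v
  simp only [dist_eq_norm] at apollonius
  rw [← exp_add, ← exp_add]
  congr 1
  linear_combination (-c) * apollonius

variable [FiniteDimensional ℝ V] [MeasurableSpace V] [BorelSpace V]

theorem integral_exp_neg_mul_norm_sub_sq {c : ℝ} (hc : 0 < c) (w : V) :
    ∫ x : V, rexp (-c * ‖x - w‖ ^ 2) = (π / c) ^ (Module.finrank ℝ V / 2 : ℝ) := by
  rw [integral_sub_right_eq_self (fun x : V ↦ rexp (-c * ‖x‖ ^ 2)) w,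
    GaussianFourier.integral_rexp_neg_mul_sq_norm hc]

theorem integrable_exp_neg_mul_norm_sub_sq {c : ℝ} (hc : 0 < c) (w : V) :
    Integrable (fun x : V ↦ rexp (-c * ‖x - w‖ ^ 2)) :=
  .of_integral_ne_zero <| by rw [integral_exp_neg_mul_norm_sub_sq hc]; positivity

theorem integral_sq_exp_neg_mul_norm_sub_sq_sub {c : ℝ} (hc : 0 < c) (u v : V) :
    ∫ x : V, (rexp (-c * ‖x - u‖ ^ 2) - rexp (-c * ‖x - v‖ ^ 2)) ^ 2
      = 2 * (π / (2 * c)) ^ (Module.finrank ℝ V / 2 : ℝ) * (1 - rexp (-(c / 2) * ‖u - v‖ ^ 2)) := by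
  have h2c : 0 < 2 * c := by positivity
  simp_rw [sub_sq, sq_exp_neg_mul, mul_assoc (2 : ℝ),
    exp_neg_mul_norm_sub_sq_mul_exp_neg_mul_norm_sub_sq]
  have gu := integrable_exp_neg_mul_norm_sub_sq h2c u
  have gv := integrable_exp_neg_mul_norm_sub_sq h2c v
  have gm := (integrable_exp_neg_mul_norm_sub_sq h2c (midpoint ℝ u v)).const_mul
    (2 * rexp (-(c / 2) * ‖u - v‖ ^ 2))
  simp_rw [← mul_assoc]
  rw [integral_add ?_ gv, integral_sub gu gm, integral_const_mul,
    integral_exp_neg_mul_norm_sub_sq h2c, integral_exp_neg_mul_norm_sub_sq h2c,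
    integral_exp_neg_mul_norm_sub_sq h2c]
  · ring
  · exact gu.sub gm

end Gaussian

/-- L² distance between two Gaussians. -/
theorem l2_norm_gaussian_difference (u v : EuclideanSpace ℝ (Fin 2)) (σ : ℝ) (hσ : 0 < σ)
    (N : EuclideanSpace ℝ (Fin 2) → EuclideanSpace ℝ (Fin 2) → ℝ)
    (hN : ∀ w x, N w x = (1 / (4 * π * σ)) * Real.exp (-‖x - w‖ ^ 2 / (4 * σ))) :
    Real.sqrt (∫ x : EuclideanSpace ℝ (Fin 2), |N u x - N v x| ^ 2)
      = (1 / Real.sqrt (4 * π * σ)) * Real.sqrt (1 - Real.exp (-‖u - v‖ ^ 2 / (8 * σ))) := by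
  have hc : 0 < (4 * σ)⁻¹ := by positivity
  have hN_gauss : ∀ w x, N w x = (1 / (4 * π * σ)) * rexp (-(4 * σ)⁻¹ * ‖x - w‖ ^ 2) := by
    intro w x
    rw [hN, neg_mul, ← div_eq_inv_mul, neg_div]
  have h_integrand : ∀ x, |N u x - N v x| ^ 2 = (1 / (4 * π * σ)) ^ 2 *
      (rexp (-(4 * σ)⁻¹ * ‖x - u‖ ^ 2) - rexp (-(4 * σ)⁻¹ * ‖x - v‖ ^ 2)) ^ 2 := by
    intro x
    rw [sq_abs, hN_gauss, hN_gauss, ← mul_sub, mul_pow]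
  have h_exponent : -((4 * σ)⁻¹ / 2) * ‖u - v‖ ^ 2 = -‖u - v‖ ^ 2 / (8 * σ) := by
    field_simp; ring
  have h_const : (1 / (4 * π * σ)) ^ 2 * (2 * (π / (2 * (4 * σ)⁻¹))) = 1 / (4 * π * σ) := by
    field_simp
  simp_rw [h_integrand]
  rw [integral_const_mul, integral_sq_exp_neg_mul_norm_sub_sq_sub hc, finrank_euclideanSpace_fin,
    h_exponent, Nat.cast_ofNat, div_self two_ne_zero, rpow_one, ← mul_assoc, h_const,
    sqrt_mul (by positivity), sqrt_div' 1 (by positivity), sqrt_one]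
end

section
/- Let F and G be finite multisets of points in ℝ² and σ > 0. For p = (a,b) ∈ ℝ² write p̄ = (b,a). Define Φ_σ(D)(x) = (1/(4πσ)) Σ_{p ∈ D} (exp(-‖x-p‖²/(4σ)) - exp(-‖x-p̄‖²/(4σ))) as a function on ℝ². Then ∫_{ℝ²} Φ_σ(F)(x) Φ_σ(G)(x) dx = (1/(4πσ)) Σ_{p ∈ F} Σ_{q ∈ G} (exp(-‖p-q‖²/(8σ)) - exp(-‖p-q̄‖²/(8σ))). -/
open MeasureTheory Real

noncomputable def mk2 (a b : ℝ) : EuclideanSpace ℝ (Fin 2) :=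
  (WithLp.equiv 2 (Fin 2 → ℝ)).symm ![a, b]

/-- Reflection of a point across the diagonal. -/
noncomputable def pbar (p : EuclideanSpace ℝ (Fin 2)) : EuclideanSpace ℝ (Fin 2) :=
  mk2 (p 1) (p 0)

/-- The persistence scale space feature map. -/
noncomputable def Phi (σ : ℝ) (D : Multiset (EuclideanSpace ℝ (Fin 2)))
    (x : EuclideanSpace ℝ (Fin 2)) : ℝ :=
  (1 / (4 * π * σ)) *
    (D.map (fun p => Real.exp (-‖x - p‖ ^ 2 / (4 * σ)) -
      Real.exp (-‖x - pbar p‖ ^ 2 / (4 * σ)))).sum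

/-!
Each summand of `Phi σ D` is a difference of two Gaussians centred at `p` and its mirror image
`pbar p`. By Apollonius' theorem, the product of the Gaussians centred at `p` and `q` is
`exp (-‖p - q‖² / (8σ))` times a Gaussian of variance `σ` centred at the midpoint of `p` and `q`,
whose integral over `ℝ²` is `2πσ`. Expanding the product of two differences gives four such terms,
and they pair up because `pbar` is an isometric involution: `‖pbar p - pbar q‖ = ‖p - q‖` and
`‖pbar p - q‖ = ‖p - pbar q‖`.
-/

section MultisetSum

variable {α ι E : Type*} [MeasurableSpace α] {μ : Measure α} [NormedAddCommGroup E]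

theorem integrable_multisetSum_map {s : Multiset ι} {f : ι → α → E}
    (hf : ∀ i ∈ s, Integrable (f i) μ) : Integrable (fun a => (s.map fun i => f i a).sum) μ := by
  induction s using Multiset.induction with
  | empty => simp
  | cons i s ih =>
    rw [Multiset.forall_mem_cons] at hf
    simp only [Multiset.map_cons, Multiset.sum_cons]
    exact hf.1.add (ih hf.2)

theorem integral_multisetSum_map [NormedSpace ℝ E] {s : Multiset ι} {f : ι → α → E}
    (hf : ∀ i ∈ s, Integrable (f i) μ) :
    ∫ a, (s.map fun i => f i a).sum ∂μ = (s.map fun i => ∫ a, f i a ∂μ).sum := by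
  induction s using Multiset.induction with
  | empty => simp
  | cons i s ih =>
    rw [Multiset.forall_mem_cons] at hf
    simp only [Multiset.map_cons, Multiset.sum_cons]
    rw [integral_add hf.1 (integrable_multisetSum_map hf.2), ih hf.2]

end MultisetSum

section Gaussian

variable {V : Type*} [NormedAddCommGroup V] [InnerProductSpace ℝ V]

noncomputable def gaussianAt (σ : ℝ) (p x : V) : ℝ := rexp (-‖x - p‖ ^ 2 / (4 * σ))

theorem gaussianAt_mul_gaussianAt {σ : ℝ} (hσ : σ ≠ 0) (p q x : V) :
    gaussianAt σ p x * gaussianAt σ q x =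
      rexp (-‖p - q‖ ^ 2 / (8 * σ)) * rexp (-(2 * σ)⁻¹ * ‖x - midpoint ℝ p q‖ ^ 2) := by
  have apollonius :=
    EuclideanGeometry.dist_sq_add_dist_sq_eq_two_mul_dist_midpoint_sq_add_half_dist_sq x p q
  simp only [dist_eq_norm] at apollonius
  rw [gaussianAt, gaussianAt, ← Real.exp_add, ← Real.exp_add]
  congr 1
  field_simp
  linear_combination (-16 : ℝ) * apollonius

variable [FiniteDimensional ℝ V] [MeasurableSpace V] [BorelSpace V]

theorem integral_gaussianAt_mul_gaussianAt {σ : ℝ} (hσ : 0 < σ) (p q : V) :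
    ∫ x, gaussianAt σ p x * gaussianAt σ q x =
      (2 * π * σ) ^ (Module.finrank ℝ V / 2 : ℝ) * rexp (-‖p - q‖ ^ 2 / (8 * σ)) := by
  simp_rw [gaussianAt_mul_gaussianAt hσ.ne', integral_const_mul,
    integral_sub_right_eq_self (fun x => rexp (-(2 * σ)⁻¹ * ‖x‖ ^ 2)),
    GaussianFourier.integral_rexp_neg_mul_sq_norm (inv_pos.2 (mul_pos two_pos hσ)), div_inv_eq_mul]
  rw [mul_comm]
  ring_nf

theorem integrable_gaussianAt_mul_gaussianAt {σ : ℝ} (hσ : 0 < σ) (p q : V) :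
    Integrable fun x => gaussianAt σ p x * gaussianAt σ q x :=
  Integrable.of_integral_ne_zero <| by
    rw [integral_gaussianAt_mul_gaussianAt hσ]
    positivity

end Gaussian

theorem pbar_pbar (p : EuclideanSpace ℝ (Fin 2)) : pbar (pbar p) = p := by
  ext i
  fin_cases i <;> rfl

theorem pbar_sub (p q : EuclideanSpace ℝ (Fin 2)) : pbar (p - q) = pbar p - pbar q := by
  ext i
  fin_cases i <;> rfl

theorem norm_pbar (p : EuclideanSpace ℝ (Fin 2)) : ‖pbar p‖ = ‖p‖ := by
  simp only [EuclideanSpace.norm_eq, Fin.sum_univ_two]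
  exact congrArg Real.sqrt (add_comm _ _)

theorem norm_pbar_sub_pbar (p q : EuclideanSpace ℝ (Fin 2)) : ‖pbar p - pbar q‖ = ‖p - q‖ := by
  rw [← pbar_sub, norm_pbar]

theorem norm_pbar_sub (p q : EuclideanSpace ℝ (Fin 2)) : ‖pbar p - q‖ = ‖p - pbar q‖ := by
  conv_lhs => rw [← pbar_pbar q, norm_pbar_sub_pbar]

noncomputable def reflectedGaussian (σ : ℝ) (p x : EuclideanSpace ℝ (Fin 2)) : ℝ :=
  gaussianAt σ p x - gaussianAt σ (pbar p) x

theorem Phi_eq_sum_reflectedGaussian (σ : ℝ) (D : Multiset (EuclideanSpace ℝ (Fin 2)))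
    (x : EuclideanSpace ℝ (Fin 2)) :
    Phi σ D x = 1 / (4 * π * σ) * (D.map fun p => reflectedGaussian σ p x).sum :=
  rfl

theorem integrable_reflectedGaussian_mul {σ : ℝ} (hσ : 0 < σ) (p q : EuclideanSpace ℝ (Fin 2)) :
    Integrable fun x => reflectedGaussian σ p x * reflectedGaussian σ q x := by
  have hI := integrable_gaussianAt_mul_gaussianAt (V := EuclideanSpace ℝ (Fin 2)) hσ
  simp only [reflectedGaussian, sub_mul, mul_sub]
  exact ((hI _ _).sub (hI _ _)).sub ((hI _ _).sub (hI _ _))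

theorem integral_reflectedGaussian_mul {σ : ℝ} (hσ : 0 < σ) (p q : EuclideanSpace ℝ (Fin 2)) :
    ∫ x, reflectedGaussian σ p x * reflectedGaussian σ q x =
      4 * π * σ * (rexp (-‖p - q‖ ^ 2 / (8 * σ)) - rexp (-‖p - pbar q‖ ^ 2 / (8 * σ))) := by
  have hI := integrable_gaussianAt_mul_gaussianAt (V := EuclideanSpace ℝ (Fin 2)) hσ
  simp only [reflectedGaussian, sub_mul, mul_sub]
  rw [integral_sub, integral_sub (hI _ _) (hI _ _), integral_sub (hI _ _) (hI _ _)]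
  rotate_left
  · exact (hI _ _).sub (hI _ _)
  · exact (hI _ _).sub (hI _ _)
  simp only [integral_gaussianAt_mul_gaussianAt hσ, finrank_euclideanSpace_fin, norm_pbar_sub,
    pbar_pbar]
  norm_num
  ring

/-- closed form for the L²(ℝ²) inner product of feature maps. -/
theorem integral_Phi_mul_Phi (σ : ℝ) (hσ : 0 < σ)
    (F G : Multiset (EuclideanSpace ℝ (Fin 2))) :
    (∫ x : EuclideanSpace ℝ (Fin 2), Phi σ F x * Phi σ G x)
      = (1 / (4 * π * σ)) *
        (F.map (fun p => (G.map (fun q =>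
          Real.exp (-‖p - q‖ ^ 2 / (8 * σ)) -
            Real.exp (-‖p - pbar q‖ ^ 2 / (8 * σ)))).sum)).sum := by
  set c := 1 / (4 * π * σ)
  have hc : c * c * (4 * π * σ) = c := by
    simp only [c]
    field_simp [hσ.ne']
  have hint := integrable_reflectedGaussian_mul hσ
  calc ∫ x, Phi σ F x * Phi σ G x
      = ∫ x, c * c * (F.map fun p =>
          (G.map fun q => reflectedGaussian σ p x * reflectedGaussian σ q x).sum).sum := by
        simp only [Phi_eq_sum_reflectedGaussian, Multiset.sum_map_mul_left,
          Multiset.sum_map_mul_right]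
        congr 1 with x
        ring
    _ = c * c * (F.map fun p =>
          (G.map fun q => ∫ x, reflectedGaussian σ p x * reflectedGaussian σ q x).sum).sum := by
        rw [integral_const_mul,
          integral_multisetSum_map fun p _ => integrable_multisetSum_map fun q _ => hint p q]
        simp_rw [integral_multisetSum_map fun q _ => hint _ q]
    _ = _ := by
        simp only [integral_reflectedGaussian_mul hσ, Multiset.sum_map_mul_left]
        rw [← mul_assoc, hc]
end

section
/- The feature map Φ_σ is injective on finite multisets of points strictly above the diagonal: if F, G are finite multisets contained in {(x₁,x₂) ∈ ℝ² : x₂ > x₁} with Φ_σ(F) = Φ_σ(G) as functions on ℝ², then F = G. -/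
open MeasureTheory Real

/-!
Expanding the square, `exp (-‖x - p‖² / t) = exp (-‖x‖² / t) * exp (-‖p‖² / t) * exp ⟪2p/t, x⟫`:
up to a common nowhere-vanishing factor and nonzero constants, the Gaussian translates are
distinct characters of the additive group, hence linearly independent (Dedekind–Artin).
So `Φ_σ F = Φ_σ G` forces the multiset identity `F + p̄(G) = G + p̄(F)`, and keeping only the
points strictly above the diagonal recovers `F = G`.
-/

theorem Multiset.eq_of_sum_map_eq_of_linearIndependent {ι R M : Type*} [Semiring R] [CharZero R]
    [AddCommMonoid M] [Module R M] {v : ι → M} (hv : LinearIndependent R v)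
    {s t : Multiset ι} (h : (s.map v).sum = (t.map v).sum) : s = t := by
  classical
  have linearCombination_toFinsupp (u : Multiset ι) :
      Finsupp.linearCombination ℕ v (Multiset.toFinsupp u) = (u.map v).sum := by
    induction u using Multiset.induction_on with
    | empty => simp
    | cons a u ih => simp [← Multiset.singleton_add, ih]
  have hv_nat : LinearIndependent ℕ v := hv.restrict_scalars (by simpa using Nat.cast_injective)
  refine Multiset.toFinsupp.injective (hv_nat ?_)
  rw [linearCombination_toFinsupp, linearCombination_toFinsupp, h]

section Gaussian

variable {E : Type*} [NormedAddCommGroup E] [InnerProductSpace ℝ E]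

noncomputable def gaussian (t : ℝ) (p x : E) : ℝ := exp (-‖x - p‖ ^ 2 / t)

theorem linearIndependent_exp_inner :
    LinearIndependent ℝ (fun (p x : E) => exp (inner ℝ p x)) := by
  refine (linearIndependent_monoidHom (Multiplicative E) ℝ).comp
    (fun p => Real.expMonoidHom.comp (innerₛₗ ℝ p).toAddMonoidHom.toMultiplicative) ?_
  intro p q hpq
  refine ext_inner_right ℝ fun x => exp_injective ?_
  exact DFunLike.congr_fun hpq (Multiplicative.ofAdd x)

theorem linearIndependent_gaussian {t : ℝ} (ht : t ≠ 0) :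
    LinearIndependent ℝ (gaussian (E := E) t) := by
  set w : E → ℝˣ := fun p => Units.mk0 (exp (-‖p‖ ^ 2 / t)) (exp_ne_zero _)
  set char : E → E → ℝ := fun p x => exp (inner ℝ ((2 / t) • p) x)
  have hchar : LinearIndependent ℝ char :=
    linearIndependent_exp_inner.comp _ (smul_right_injective E (by simpa using ht))
  let scale := LinearMap.mulLeft ℝ fun x : E => exp (‖x‖ ^ 2 / t)
  have hfactor : scale ∘ gaussian t = w • char := by
    ext p x
    simp only [scale, gaussian, char, w, Function.comp_apply, LinearMap.mulLeft_apply,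
      Pi.mul_apply, Pi.smul_apply', Units.smul_mk0, Pi.smul_apply, smul_eq_mul, ← exp_add,
      inner_smul_left, norm_sub_sq_real, real_inner_comm, conj_trivial]
    congr 1
    field_simp
    ring
  refine LinearIndependent.of_comp scale ?_
  rw [hfactor]
  exact hchar.units_smul w

end Gaussian

@[simp] lemma pbar_apply_zero (p : EuclideanSpace ℝ (Fin 2)) : pbar p 0 = p 1 := rfl

@[simp] lemma pbar_apply_one (p : EuclideanSpace ℝ (Fin 2)) : pbar p 1 = p 0 := rfl

lemma Phi_eq_smul_sum_gaussian (σ : ℝ) (D : Multiset (EuclideanSpace ℝ (Fin 2))) :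
    Phi σ D = (1 / (4 * π * σ)) •
      ((D.map (gaussian (4 * σ))).sum - ((D.map pbar).map (gaussian (4 * σ))).sum) := by
  ext x
  simp [Phi, gaussian, Multiset.sum_map_sub, Pi.multiset_sum_apply, Multiset.map_map,
    Function.comp_def]

lemma filter_above_diagonal_add_map_pbar {A B : Multiset (EuclideanSpace ℝ (Fin 2))}
    (hA : ∀ p ∈ A, p 0 < p 1) (hB : ∀ p ∈ B, p 0 < p 1) :
    (A + B.map pbar).filter (fun p => p 0 < p 1) = A := by
  rw [Multiset.filter_add, Multiset.filter_eq_self.mpr hA, Multiset.filter_eq_nil.mpr, add_zero]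
  simp only [Multiset.mem_map, forall_exists_index, and_imp]
  rintro _ p hp rfl
  simpa using (hB p hp).le

/-- injectivity of the feature map on diagrams strictly above the diagonal. -/
theorem Phi_injective (σ : ℝ) (hσ : 0 < σ)
    (F G : Multiset (EuclideanSpace ℝ (Fin 2)))
    (hF : ∀ p ∈ F, p 0 < p 1) (hG : ∀ p ∈ G, p 0 < p 1)
    (h : Phi σ F = Phi σ G) : F = G := by
  have hsum : ((F + G.map pbar).map (gaussian (4 * σ))).sum =
      ((G + F.map pbar).map (gaussian (4 * σ))).sum := by
    rw [Phi_eq_smul_sum_gaussian, Phi_eq_smul_sum_gaussian] at h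
    have h' := smul_right_injective _ (by positivity : 1 / (4 * π * σ) ≠ 0) h
    simp only [Multiset.map_add, Multiset.sum_add]
    linear_combination h'
  have hreflect : F + G.map pbar = G + F.map pbar :=
    Multiset.eq_of_sum_map_eq_of_linearIndependent (linearIndependent_gaussian (by positivity)) hsum
  rw [← filter_above_diagonal_add_map_pbar hF hG, hreflect,
    filter_above_diagonal_add_map_pbar hG hF]
end

section
/- Landscape distance grows unboundedly for translated diagrams: for λ ≥ 0, let F_λ = {(-λ, λ)} and G_λ = {(-λ+1, λ+1)} be one-point persistence diagrams. The persistence landscape of a one-point diagram {(b,d)} is λ₁(t) = max(0, min(t - b, d - t)) (and λ_k = 0 for k ≥ 2). Then ‖λ^{F_λ} - λ^{G_λ}‖_{L²(ℝ)}² grows linearly in λ as λ → ∞; in particular the landscape distance ‖λ^{F_λ} - λ^{G_λ}‖_{L²} is unbounded in λ. -/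
open MeasureTheory Real

/-- The persistence landscape (first landscape function) of the one-point diagram {(b,d)}. -/
noncomputable def landscape (b d : ℝ) (t : ℝ) : ℝ :=
  max 0 (min (t - b) (d - t))

/-!
Let `F` be the tent over `[-l, l]` and `G = F (· - s)` its translate by `0 ≤ s ≤ l`.
Cut `ℝ` at `-l, -l + s, 0, s, l, l + s`. Outside `[-l, l + s]` both tents vanish; on
`[-l + s, 0]` and `[s, l]` they have the same slope, so `F - G = ±s` there; on each of the
three remaining pieces of length `s` the difference is affine and `(F - G)²` integrates to
`s³/3`. Hence `‖F - G‖₂² = s³ + 2 s² (l - s) = 2 s² l - s³`, linear in `l` for fixed `s`.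
-/

namespace landscape

variable {b d t : ℝ}

@[fun_prop]
theorem continuous (b d : ℝ) : Continuous (landscape b d) := by
  unfold landscape; fun_prop

theorem eq_zero_of_le_birth (h : t ≤ b) : landscape b d t = 0 :=
  max_eq_left (min_le_of_left_le (sub_nonpos.2 h))

theorem eq_zero_of_death_le (h : d ≤ t) : landscape b d t = 0 :=
  max_eq_left (min_le_of_right_le (sub_nonpos.2 h))

theorem eq_sub_birth (hb : b ≤ t) (h : t - b ≤ d - t) : landscape b d t = t - b := by
  rw [landscape, min_eq_left h, max_eq_right (sub_nonneg.2 hb)]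

theorem eq_death_sub (hd : t ≤ d) (h : d - t ≤ t - b) : landscape b d t = d - t := by
  rw [landscape, min_eq_right h, max_eq_right (sub_nonneg.2 hd)]

end landscape

theorem integral_sub_sq (a b c : ℝ) :
    ∫ t in a..b, (t - c) ^ 2 = ((b - c) ^ 3 - (a - c) ^ 3) / 3 := by
  rw [intervalIntegral.integral_comp_sub_right (fun x => x ^ 2), integral_pow]
  norm_num

section translate

variable {l s t : ℝ}

theorem sq_sub_landscape_translate_eq_zero (hs : 0 ≤ s) (ht : t ∉ Set.Ioc (-l) (l + s)) :
    (landscape (-l) l t - landscape (-l + s) (l + s) t) ^ 2 = 0 := by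
  rcases not_and_or.1 ht with h | h <;> simp only [not_lt, not_le] at h
  · rw [landscape.eq_zero_of_le_birth h, landscape.eq_zero_of_le_birth (by linarith)]; ring
  · rw [landscape.eq_zero_of_death_le (by linarith), landscape.eq_zero_of_death_le h.le]; ring

theorem integral_sq_sub_landscape_translate (hs : 0 ≤ s) (hsl : s ≤ l) :
    ∫ t, (landscape (-l) l t - landscape (-l + s) (l + s) t) ^ 2 = 2 * s ^ 2 * l - s ^ 3 := by
  set f : ℝ → ℝ := fun t => (landscape (-l) l t - landscape (-l + s) (l + s) t) ^ 2
  have hint (a b : ℝ) : IntervalIntegrable f volume a b :=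
    (by fun_prop : Continuous f).intervalIntegrable a b
  have piece {a b : ℝ} (g : ℝ → ℝ) (hab : a ≤ b) (hfg : ∀ t ∈ Set.Icc a b, f t = g t) :
      ∫ t in a..b, f t = ∫ t in a..b, g t :=
    intervalIntegral.integral_congr (by rwa [Set.uIcc_of_le hab])
  rw [← setIntegral_eq_integral_of_forall_compl_eq_zero (fun _ ↦
      sq_sub_landscape_translate_eq_zero hs),
    ← intervalIntegral.integral_of_le (by linarith),
    ← intervalIntegral.integral_add_adjacent_intervals (b := -l + s) (c := l + s)
      (hint _ _) (hint _ _),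
    ← intervalIntegral.integral_add_adjacent_intervals (b := 0) (c := l + s)
      (hint _ _) (hint _ _),
    ← intervalIntegral.integral_add_adjacent_intervals (b := s) (c := l + s)
      (hint _ _) (hint _ _),
    ← intervalIntegral.integral_add_adjacent_intervals (b := l) (c := l + s)
      (hint _ _) (hint _ _),
    piece (fun t => (t - -l) ^ 2) (by linarith) ?rise,
    piece (fun _ => s ^ 2) (by linarith) ?left,
    piece (fun t => 4 * (t - s / 2) ^ 2) hs ?peak,
    piece (fun _ => s ^ 2) hsl ?right,
    piece (fun t => (t - (l + s)) ^ 2) (by linarith) ?fall]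
  · simp only [integral_sub_sq, intervalIntegral.integral_const_mul,
      intervalIntegral.integral_const, smul_eq_mul]
    ring
  all_goals rintro t ⟨h₁, h₂⟩; dsimp only [f]
  case rise =>
    rw [landscape.eq_sub_birth h₁ (by linarith), landscape.eq_zero_of_le_birth h₂]; ring
  case left =>
    rw [landscape.eq_sub_birth (by linarith) (by linarith),
      landscape.eq_sub_birth h₁ (by linarith)]; ring
  case peak =>
    rw [landscape.eq_death_sub (by linarith) (by linarith),
      landscape.eq_sub_birth (by linarith) (by linarith)]; ring
  case right =>
    rw [landscape.eq_death_sub h₂ (by linarith),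
      landscape.eq_death_sub (by linarith) (by linarith)]; ring
  case fall =>
    rw [landscape.eq_zero_of_death_le h₁, landscape.eq_death_sub h₂ (by linarith)]; ring

end translate

/-- the landscape L² distance between the one-point diagrams
F_λ = {(-λ,λ)} and G_λ = {(-λ+1,λ+1)} grows linearly in λ (its square equals 2λ - 1 for
λ ≥ 1); in particular it is unbounded. -/
theorem landscape_distance_unbounded :
    (∀ l : ℝ, 1 ≤ l →
      (∫ t : ℝ, (landscape (-l) l t - landscape (-l + 1) (l + 1) t) ^ 2) = 2 * l - 1) ∧
    ∀ M : ℝ, ∃ l : ℝ,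
      Real.sqrt (∫ t : ℝ, (landscape (-l) l t - landscape (-l + 1) (l + 1) t) ^ 2) > M := by
  have hsq (l : ℝ) (hl : 1 ≤ l) :
      ∫ t, (landscape (-l) l t - landscape (-l + 1) (l + 1) t) ^ 2 = 2 * l - 1 := by
    rw [integral_sq_sub_landscape_translate zero_le_one hl]; ring
  refine ⟨hsq, fun M => ⟨M ^ 2 + 1, ?_⟩⟩
  rw [hsq _ (by nlinarith)]
  exact Real.lt_sqrt_of_sq_lt (by nlinarith)
end
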